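/- The union C of the 36 points consisting of all coordinate permutations of v = (7,7,-2,-2,-2,-2,-2,-2,-2)/√126 together with their negatives -C is a set of 72 unit vectors in the hyperplane of ℝ⁹ with coordinate sum zero; the maximal inner product between distinct points of C ∪ -C is 5/14, while every inner product between a point of C and a point of -C is at most 2/7. -/

import Mathlib

/-!
A permutation of `v` is determined by the 2-set `S ⊆ Fin 9` of positions of its entries `7/√126`.
Writing its coordinates as `-2/√126 + (9/√126) · 1_S`, the inner product of the points for `S`
and `T` is `(81 |S ∩ T| - 36) / 126`, that is `1`, `5/14` or `-2/7` according as `|S ∩ T|` is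
`2`, `1` or `0`; negating one of the points flips the sign. Hence distinct points of `C ∪ -C`
have inner product at most `5/14`, points of `C` and `-C` at most `2/7 < 1` (so `C` and `-C`
are disjoint), and `C` has `choose 9 2 = 36` points.
-/

open scoped RealInnerProductSpace

/-- The vector `(7,7,-2,-2,-2,-2,-2,-2,-2)/√126` in `ℝ⁹`. -/
noncomputable def nrVec : EuclideanSpace ℝ (Fin 9) :=
  (WithLp.equiv 2 (Fin 9 → ℝ)).symm
    fun i => (if (i : ℕ) < 2 then 7 else -2) / Real.sqrt 126

/-- The set of all coordinate permutations of `nrVec`. -/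
noncomputable def nrCode : Set (EuclideanSpace ℝ (Fin 9)) :=
  {x | ∃ σ : Equiv.Perm (Fin 9),
    x = (WithLp.equiv 2 (Fin 9 → ℝ)).symm fun i => nrVec (σ i)}

open Finset

section TwoValued

variable {ι : Type*} [DecidableEq ι]

def twoValued (a b : ℝ) (S : Finset ι) : EuclideanSpace ℝ ι :=
  WithLp.toLp 2 fun i => if i ∈ S then a else b

@[simp]
lemma twoValued_apply (a b : ℝ) (S : Finset ι) (i : ι) :
    twoValued a b S i = if i ∈ S then a else b := rfl

lemma sum_twoValued [Fintype ι] (a b : ℝ) (S : Finset ι) :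
    ∑ i, twoValued a b S i = (a - b) * #S + b * Fintype.card ι := by
  have h (i : ι) : twoValued a b S i = (a - b) * (if i ∈ S then 1 else 0) + b := by
    by_cases hi : i ∈ S <;> simp [hi]
  simp only [h, sum_add_distrib, ← mul_sum, sum_boole, sum_const, card_univ, nsmul_eq_mul,
    filter_mem_eq_inter, univ_inter]
  ring

lemma inner_twoValued [Fintype ι] (a b : ℝ) (S T : Finset ι) :
    ⟪twoValued a b S, twoValued a b T⟫ =
      (a - b) ^ 2 * #(S ∩ T) + b * (a - b) * (#S + #T) + b ^ 2 * Fintype.card ι := by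
  have h (i : ι) : twoValued a b T i * twoValued a b S i =
      (a - b) ^ 2 * (if i ∈ S ∩ T then 1 else 0) +
        b * (a - b) * ((if i ∈ S then 1 else 0) + (if i ∈ T then 1 else 0)) + b ^ 2 := by
    by_cases hS : i ∈ S <;> by_cases hT : i ∈ T <;> simp [hS, hT] <;> ring
  simp only [PiLp.inner_apply, RCLike.inner_apply, conj_trivial, h, sum_add_distrib, ← mul_sum,
    sum_boole, sum_const, card_univ, nsmul_eq_mul, filter_mem_eq_inter, univ_inter]
  ring

lemma twoValued_injective {a b : ℝ} (hab : a ≠ b) :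
    Function.Injective (twoValued a b : Finset ι → EuclideanSpace ℝ ι) := by
  intro S T h
  ext i
  have hi : twoValued a b S i = twoValued a b T i := by rw [h]
  by_cases hS : i ∈ S <;> by_cases hT : i ∈ T <;> simp [hS, hT, hab, hab.symm] at hi ⊢

lemma twoValued_comp_perm (a b : ℝ) (S : Finset ι) (σ : Equiv.Perm ι) :
    (WithLp.toLp 2 fun i => twoValued a b S (σ i)) =
      twoValued a b (S.map σ.symm.toEmbedding) := by
  ext i
  simp [mem_map_equiv]

lemma setOf_perm_twoValued [Fintype ι] (a b : ℝ) (S₀ : Finset ι) :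
    {x | ∃ σ : Equiv.Perm ι, x = WithLp.toLp 2 fun i => twoValued a b S₀ (σ i)} =
      twoValued a b '' {S | #S = #S₀} := by
  ext x
  simp only [twoValued_comp_perm, Set.mem_ofPred_eq, Set.mem_image]
  constructor
  · rintro ⟨σ, rfl⟩
    exact ⟨_, card_map _, rfl⟩
  · rintro ⟨S, hS, rfl⟩
    obtain ⟨σ, hσ⟩ := Equiv.Perm.exists_map_finset_eq S S₀ hS
    refine ⟨σ, ?_⟩
    rw [← hσ, map_map]
    simp

end TwoValued

noncomputable def nrPoint (S : Finset (Fin 9)) : EuclideanSpace ℝ (Fin 9) :=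
  twoValued (7 / √126) (-2 / √126) S

lemma nrVec_eq : nrVec = nrPoint {0, 1} := by
  ext i
  fin_cases i <;> simp [nrVec, nrPoint]

lemma nrCode_eq : nrCode = nrPoint '' {S | #S = 2} := by
  simp only [nrCode, WithLp.equiv_symm_apply, nrVec_eq, nrPoint]
  exact setOf_perm_twoValued _ _ _

lemma inner_nrPoint {S T : Finset (Fin 9)} (hS : #S = 2) (hT : #T = 2) :
    ⟪nrPoint S, nrPoint T⟫ = (81 * #(S ∩ T) - 36) / 126 := by
  have h126 : √126 ^ 2 = 126 := Real.sq_sqrt (by norm_num)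
  rw [nrPoint, nrPoint, inner_twoValued, hS, hT, Fintype.card_fin]
  field_simp
  rw [h126]
  ring

lemma inner_nrPoint_self {S : Finset (Fin 9)} (hS : #S = 2) : ⟪nrPoint S, nrPoint S⟫ = 1 := by
  rw [inner_nrPoint hS hS, inter_self, hS]
  norm_num

lemma norm_nrPoint {S : Finset (Fin 9)} (hS : #S = 2) : ‖nrPoint S‖ = 1 := by
  rw [← pow_eq_one_iff_of_nonneg (norm_nonneg _) two_ne_zero, ← real_inner_self_eq_norm_sq,
    inner_nrPoint_self hS]

lemma sum_nrPoint {S : Finset (Fin 9)} (hS : #S = 2) : ∑ i, nrPoint S i = 0 := by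
  rw [nrPoint, sum_twoValued, hS, Fintype.card_fin]
  ring

lemma card_inter_le_one_of_ne {S T : Finset (Fin 9)} (hS : #S = 2) (hT : #T = 2) (hne : S ≠ T) :
    #(S ∩ T) ≤ 1 := by
  by_contra! h
  have hSi : S ∩ T = S := eq_of_subset_of_card_le inter_subset_left (by omega)
  have hTi : S ∩ T = T := eq_of_subset_of_card_le inter_subset_right (by omega)
  exact hne (hSi.symm.trans hTi)

lemma inner_nrPoint_le_of_ne {S T : Finset (Fin 9)} (hS : #S = 2) (hT : #T = 2) (hne : S ≠ T) :
    ⟪nrPoint S, nrPoint T⟫ ≤ 5 / 14 := by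
  have h : (#(S ∩ T) : ℝ) ≤ 1 := by exact_mod_cast card_inter_le_one_of_ne hS hT hne
  rw [inner_nrPoint hS hT]
  linarith

lemma inner_nrPoint_neg_le {S T : Finset (Fin 9)} (hS : #S = 2) (hT : #T = 2) :
    ⟪nrPoint S, -nrPoint T⟫ ≤ 2 / 7 := by
  have h : (0 : ℝ) ≤ #(S ∩ T) := Nat.cast_nonneg _
  rw [inner_neg_right, inner_nrPoint hS hT]
  linarith

lemma nrPoint_ne_neg {S T : Finset (Fin 9)} (hS : #S = 2) (hT : #T = 2) :
    nrPoint S ≠ -nrPoint T := by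
  intro h
  have h' := inner_nrPoint_neg_le hS hT
  rw [← h, inner_nrPoint_self hS] at h'
  norm_num at h'

lemma nrPoint_injective : Function.Injective nrPoint :=
  twoValued_injective (by norm_num)

lemma mem_nrCode_union_neg {x : EuclideanSpace ℝ (Fin 9)} :
    x ∈ nrCode ∪ (Neg.neg '' nrCode) ↔ ∃ S, #S = 2 ∧ (x = nrPoint S ∨ x = -nrPoint S) := by
  simp only [nrCode_eq, Set.mem_union, Set.mem_image, Set.mem_ofPred_eq]
  aesop

lemma ncard_nrCode : nrCode.ncard = 36 := by
  have h : {S : Finset (Fin 9) | #S = 2} = ↑(powersetCard 2 (univ : Finset (Fin 9))) := by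
    ext S
    simp
  rw [nrCode_eq, Set.ncard_image_of_injective _ nrPoint_injective, h, Set.ncard_coe_finset,
    card_powersetCard, card_univ, Fintype.card_fin]
  rfl

lemma disjoint_nrCode_neg : Disjoint nrCode (Neg.neg '' nrCode) := by
  rw [Set.disjoint_left, nrCode_eq]
  rintro _ ⟨S, hS, rfl⟩ ⟨_, ⟨T, hT, rfl⟩, h⟩
  exact nrPoint_ne_neg hS hT h.symm

lemma inner_le_of_mem_nrCode_union_neg {x y : EuclideanSpace ℝ (Fin 9)}
    (hx : x ∈ nrCode ∪ (Neg.neg '' nrCode)) (hy : y ∈ nrCode ∪ (Neg.neg '' nrCode))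
    (hne : x ≠ y) : ⟪x, y⟫ ≤ 5 / 14 := by
  obtain ⟨S, hS, rfl | rfl⟩ := mem_nrCode_union_neg.mp hx <;>
    obtain ⟨T, hT, rfl | rfl⟩ := mem_nrCode_union_neg.mp hy
  · exact inner_nrPoint_le_of_ne hS hT (by rintro rfl; exact hne rfl)
  · linarith [inner_nrPoint_neg_le hS hT]
  · rw [inner_neg_left, ← inner_neg_right]
    linarith [inner_nrPoint_neg_le hS hT]
  · rw [inner_neg_neg]
    exact inner_nrPoint_le_of_ne hS hT (by rintro rfl; exact hne rfl)

/-- The union of the 36 coordinate permutations of `(7,7,-2,…,-2)/√126` with their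
negatives is a set of 72 unit vectors in the hyperplane of `ℝ⁹` with coordinate sum zero;
the maximal inner product between distinct points of `C ∪ -C` is `5/14`, while every
inner product between a point of `C` and a point of `-C` is at most `2/7`. -/
theorem stmt13 :
    nrCode.ncard = 36 ∧
    (nrCode ∪ (Neg.neg '' nrCode)).ncard = 72 ∧
    (∀ x ∈ nrCode ∪ (Neg.neg '' nrCode), ‖x‖ = 1 ∧ ∑ i, x i = 0) ∧
    (∀ x ∈ nrCode ∪ (Neg.neg '' nrCode), ∀ y ∈ nrCode ∪ (Neg.neg '' nrCode),
      x ≠ y → ⟪x, y⟫ ≤ 5 / 14) ∧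
    (∃ x ∈ nrCode ∪ (Neg.neg '' nrCode), ∃ y ∈ nrCode ∪ (Neg.neg '' nrCode),
      x ≠ y ∧ ⟪x, y⟫ = 5 / 14) ∧
    ∀ x ∈ nrCode, ∀ y ∈ Neg.neg '' nrCode, ⟪x, y⟫ ≤ 2 / 7 := by
  have hfin : nrCode.Finite := nrCode_eq ▸ (Set.toFinite _).image _
  refine ⟨ncard_nrCode, ?_, ?_, fun x hx y hy ↦ inner_le_of_mem_nrCode_union_neg hx hy, ?_, ?_⟩
  · rw [Set.ncard_union_eq disjoint_nrCode_neg hfin (hfin.image _),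
      Set.ncard_image_of_injective _ neg_injective, ncard_nrCode]
  · intro x hx
    obtain ⟨S, hS, rfl | rfl⟩ := mem_nrCode_union_neg.mp hx
    · exact ⟨norm_nrPoint hS, sum_nrPoint hS⟩
    · simp only [norm_neg, PiLp.neg_apply, sum_neg_distrib, norm_nrPoint hS, sum_nrPoint hS,
        neg_zero, and_self]
  · refine ⟨nrPoint {0, 1}, mem_nrCode_union_neg.mpr ⟨_, rfl, .inl rfl⟩,
      nrPoint {1, 2}, mem_nrCode_union_neg.mpr ⟨_, rfl, .inl rfl⟩,
      nrPoint_injective.ne (by decide), ?_⟩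
    rw [inner_nrPoint rfl rfl, show #({0, 1} ∩ {1, 2} : Finset (Fin 9)) = 1 by decide]
    norm_num
  · rw [nrCode_eq]
    rintro _ ⟨S, hS, rfl⟩ _ ⟨_, ⟨T, hT, rfl⟩, rfl⟩
    exact inner_nrPoint_neg_le hS hT
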